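/- Let p ∈ [1,∞) and n, m ∈ ℕ with 1 ≤ n < m. Then for every bounded real sequence x, ‖x‖_{∞,p,m}^p ≤ ((⌊m/n⌋ + 1)·n / m) · ‖x‖_{∞,p,n}^p ≤ 2 ‖x‖_{∞,p,n}^p. -/

import Mathlib

open Finset

noncomputable def discNorm (x : ℕ → ℝ) (p : ℝ) (n : ℕ) : ℝ :=
  ⨆ j : ℕ, ((1 / (n : ℝ)) * ∑ i ∈ Finset.range n, |x (j + i)| ^ p) ^ (1 / p)

/-! A window of length `m` is covered by `⌊m/n⌋ + 1` consecutive windows of length `n`, each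
of which has `p`-th power sum at most `n ‖x‖_{∞,p,n}^p`; dividing by `m` gives the first
inequality. The second is `(⌊m/n⌋ + 1) n ≤ m + n ≤ 2m`. -/

noncomputable def windowMean (x : ℕ → ℝ) (p : ℝ) (n j : ℕ) : ℝ :=
  (1 / (n : ℝ)) * ∑ i ∈ range n, |x (j + i)| ^ p

section

variable {x : ℕ → ℝ} {p : ℝ}

lemma windowMean_nonneg (n j : ℕ) : 0 ≤ windowMean x p n j :=
  mul_nonneg (by positivity) (sum_nonneg fun _ _ => Real.rpow_nonneg (abs_nonneg _) p)

lemma discNorm_nonneg (n : ℕ) : 0 ≤ discNorm x p n :=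
  Real.iSup_nonneg fun j => Real.rpow_nonneg (windowMean_nonneg n j) _

lemma windowMean_le_rpow_of_abs_le (hp : 0 < p) {C : ℝ} (hC : ∀ i, |x i| ≤ C) (n j : ℕ) :
    windowMean x p n j ≤ C ^ p := by
  have hC0 : 0 ≤ C := (abs_nonneg _).trans (hC 0)
  rcases n.eq_zero_or_pos with rfl | hn
  · simpa [windowMean] using Real.rpow_nonneg hC0 p
  calc windowMean x p n j ≤ (1 / (n : ℝ)) * (n • C ^ p) := by
        refine mul_le_mul_of_nonneg_left ?_ (by positivity)
        refine (sum_le_card_nsmul _ _ _ fun i _ => ?_).trans_eq (by rw [card_range])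
        exact Real.rpow_le_rpow (abs_nonneg _) (hC _) hp.le
    _ = C ^ p := by field_simp; simp

lemma bddAbove_range_windowMean_rpow (hp : 0 < p) (hx : ∃ C, ∀ i, |x i| ≤ C) (n : ℕ) :
    BddAbove (Set.range fun j => windowMean x p n j ^ (1 / p)) := by
  obtain ⟨C, hC⟩ := hx
  refine ⟨(C ^ p) ^ (1 / p), Set.forall_mem_range.2 fun j => ?_⟩
  exact Real.rpow_le_rpow (windowMean_nonneg n j) (windowMean_le_rpow_of_abs_le hp hC n j)
    (by positivity)

lemma windowMean_le_discNorm_rpow (hp : 0 < p) (hx : ∃ C, ∀ i, |x i| ≤ C) (n j : ℕ) :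
    windowMean x p n j ≤ discNorm x p n ^ p := by
  rw [← Real.rpow_inv_rpow (windowMean_nonneg n j) hp.ne', ← one_div]
  exact Real.rpow_le_rpow (Real.rpow_nonneg (windowMean_nonneg n j) _)
    (le_ciSup (bddAbove_range_windowMean_rpow hp hx n) j) hp.le

lemma discNorm_rpow_le (hp : 0 < p) {n : ℕ} {B : ℝ} (hB : 0 ≤ B)
    (h : ∀ j, windowMean x p n j ≤ B) : discNorm x p n ^ p ≤ B := by
  have hle : discNorm x p n ≤ B ^ (1 / p) :=
    ciSup_le fun j => Real.rpow_le_rpow (windowMean_nonneg n j) (h j) (by positivity)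
  rw [← Real.rpow_inv_rpow hB hp.ne', ← one_div]
  exact Real.rpow_le_rpow (discNorm_nonneg n) hle hp.le

end

lemma sum_range_mul_le_of_forall_sum_range_le {f : ℕ → ℝ} {n : ℕ} {B : ℝ}
    (h : ∀ j, ∑ i ∈ range n, f (j + i) ≤ B) (k j : ℕ) :
    ∑ i ∈ range (k * n), f (j + i) ≤ k * B := by
  induction k with
  | zero => simp
  | succ k ih =>
    rw [add_mul, one_mul, sum_range_add, Nat.cast_succ, add_mul, one_mul]
    simp_rw [← add_assoc]
    exact add_le_add ih (h _)

lemma windowMean_le_of_forall_windowMean_le {x : ℕ → ℝ} {p T : ℝ} {n : ℕ} (hn : 0 < n)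
    (h : ∀ j, windowMean x p n j ≤ T) (m j : ℕ) :
    windowMean x p m j ≤ ((m / n : ℕ) + 1) * (n : ℝ) / m * T := by
  have hblock (j : ℕ) : ∑ i ∈ range n, |x (j + i)| ^ p ≤ n * T := by
    have := mul_le_mul_of_nonneg_left (h j) (Nat.cast_nonneg n)
    rwa [windowMean, ← mul_assoc, mul_one_div_cancel (by positivity), one_mul] at this
  have hcover : m ≤ (m / n + 1) * n := (Nat.lt_div_mul_add hn).le.trans_eq (by ring)
  calc windowMean x p m j
      ≤ (1 / (m : ℝ)) * ∑ i ∈ range ((m / n + 1) * n), |x (j + i)| ^ p :=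
        mul_le_mul_of_nonneg_left (sum_le_sum_of_subset_of_nonneg (range_subset_range.2 hcover)
          fun _ _ _ => Real.rpow_nonneg (abs_nonneg _) p) (by positivity)
    _ ≤ (1 / (m : ℝ)) * (((m / n : ℕ) + 1 : ℕ) * (n * T)) := by
        gcongr
        exact sum_range_mul_le_of_forall_sum_range_le (f := fun i => |x i| ^ p) hblock _ j
    _ = ((m / n : ℕ) + 1) * (n : ℝ) / m * T := by push_cast; ring

lemma nat_div_add_one_mul_div_le_two {n m : ℕ} (hnm : n ≤ m) :
    ((m / n : ℕ) + 1) * (n : ℝ) / m ≤ 2 := by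
  rcases m.eq_zero_or_pos with rfl | hm
  · simp
  rw [div_le_iff₀ (by positivity)]
  have hdiv : ((m / n : ℕ) : ℝ) * n ≤ m := by exact_mod_cast Nat.div_mul_le_self m n
  have : (n : ℝ) ≤ m := by exact_mod_cast hnm
  linarith

theorem stmt6 (p : ℝ) (hp : 1 ≤ p) (n m : ℕ) (hn : 1 ≤ n) (hnm : n < m)
    (x : ℕ → ℝ) (hx : ∃ C, ∀ i, |x i| ≤ C) :
    discNorm x p m ^ p ≤ (((m / n : ℕ) + 1) * (n : ℝ) / (m : ℝ)) * discNorm x p n ^ p ∧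
      (((m / n : ℕ) + 1) * (n : ℝ) / (m : ℝ)) * discNorm x p n ^ p ≤
        2 * discNorm x p n ^ p := by
  have hp0 : 0 < p := one_pos.trans_le hp
  have hT : 0 ≤ discNorm x p n ^ p := Real.rpow_nonneg (discNorm_nonneg n) p
  refine ⟨discNorm_rpow_le hp0 (by positivity) fun j => ?_,
    mul_le_mul_of_nonneg_right (nat_div_add_one_mul_div_le_two hnm.le) hT⟩
  exact windowMean_le_of_forall_windowMean_le hn (windowMean_le_discNorm_rpow hp0 hx n) m j
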